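/- In the LR-ending partisan subtraction game with subtraction set S = {2, 5}, the value of a single pile of n tokens is periodic in n with period 7: for n ≡ 0,1,2,3,4,5,6 (mod 7) the values are, respectively, *L, *R, {*L}, {*R}, *L, {*L, {*R}}, {*L, *R} (up to equivalence ≡). -/

import Mathlib

/-- Positions of LR-ending partisan games: two terminals and finite option sets
(represented as lists; set-like behavior is captured by the `Iso` relation). -/
inductive Pos : Type
  | termL : Pos
  | termR : Pos
  | opts : List Pos → Pos

namespace Pos

/-- Valid positions: every non-terminal position has a nonempty set of options. -/
inductive Valid : Pos → Prop
  | termL : Valid termL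
  | termR : Valid termR
  | opts : ∀ gs : List Pos, gs ≠ [] → (∀ g ∈ gs, Valid g) → Valid (opts gs)

/-- Disjunctive sum. -/
def sum : Pos → Pos → Pos
  | termL, termL => termL
  | termL, termR => termR
  | termR, termL => termR
  | termR, termR => termL
  | termL, opts hs => opts (hs.attach.map (fun h => sum termL h.1))
  | termR, opts hs => opts (hs.attach.map (fun h => sum termR h.1))
  | opts gs, termL => opts (gs.attach.map (fun g => sum g.1 termL))
  | opts gs, termR => opts (gs.attach.map (fun g => sum g.1 termR))
  | opts gs, opts hs =>
      opts (gs.attach.map (fun g => sum g.1 (opts hs)) ++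
            hs.attach.map (fun h => sum (opts gs) h.1))
termination_by g h => sizeOf g + sizeOf h
decreasing_by
  all_goals
    first
      | (have := List.sizeOf_lt_of_mem h.2; simp_all; omega)
      | (have := List.sizeOf_lt_of_mem g.2; simp_all; omega)

/-- Conjugate: swap the two kinds of terminal positions. -/
def conj : Pos → Pos
  | termL => termR
  | termR => termL
  | opts gs => opts (gs.attach.map (fun g => conj g.1))
decreasing_by
  have := List.sizeOf_lt_of_mem g.2; simp_all; omega

/-- Isomorphism of game trees (positions viewed as sets of options). -/
def Iso : Pos → Pos → Prop
  | termL, termL => True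
  | termR, termR => True
  | opts gs, opts hs =>
      (∀ g ∈ gs.attach, ∃ h ∈ hs.attach, Iso g.1 h.1) ∧
      (∀ h ∈ hs.attach, ∃ g ∈ gs.attach, Iso g.1 h.1)
  | _, _ => False
termination_by g h => sizeOf g + sizeOf h
decreasing_by
  all_goals
    (have hg := List.sizeOf_lt_of_mem g.2; have hh := List.sizeOf_lt_of_mem h.2;
     simp_all; omega)

inductive Player : Type
  | left : Player
  | right : Player
  deriving DecidableEq

/-- `Wins p b G` : player `p` has a winning strategy from position `G`,
where `b = true` means it is `p`'s turn to move and `b = false` means the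
opponent is to move.  A terminal position is won by the player given by
its label, regardless of whose turn it is. -/
inductive Wins : Player → Bool → Pos → Prop
  | termL : ∀ b, Wins Player.left b termL
  | termR : ∀ b, Wins Player.right b termR
  | move : ∀ (p : Player) (gs : List Pos) (g : Pos), g ∈ gs →
      Wins p false g → Wins p true (opts gs)
  | wait : ∀ (p : Player) (gs : List Pos),
      (∀ g, g ∈ gs → Wins p true g) → Wins p false (opts gs)

inductive Outcome : Type
  | L : Outcome
  | R : Outcome
  | N : Outcome
  | P : Outcome
  deriving DecidableEq

/-- The outcome of a position. -/
noncomputable def outcome (G : Pos) : Outcome := by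
  classical
  exact
    if Wins Player.left true G then
      if Wins Player.left false G then Outcome.L else Outcome.N
    else
      if Wins Player.left false G then Outcome.P else Outcome.R

/-- Equivalence of positions: the outcome agrees in every (valid) context. -/
def equiv (G H : Pos) : Prop :=
  ∀ X : Pos, Valid X → outcome (sum G X) = outcome (sum H X)

end Pos
namespace Pos

mutual
/-- `Ln n` is the position `*L_n`: `*L_0 = *L`, `*L_n = {*L_{n-1}, ..., *L_0}`. -/
def Ln : ℕ → Pos
  | 0 => termL
  | n + 1 => opts (LnList (n + 1))
termination_by n => 2 * n + 1
/-- `LnList n = [*L_{n-1}, ..., *L_0]`. -/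
def LnList : ℕ → List Pos
  | 0 => []
  | n + 1 => Ln n :: LnList n
termination_by n => 2 * n
end

mutual
/-- `Rn n` is the position `*R_n`. -/
def Rn : ℕ → Pos
  | 0 => termR
  | n + 1 => opts (RnList (n + 1))
termination_by n => 2 * n + 1
def RnList : ℕ → List Pos
  | 0 => []
  | n + 1 => Rn n :: RnList n
termination_by n => 2 * n
end

/-- `kome n` is `✠_n = {*L_{n-1}, *R_{n-1}, ..., *L_0, *R_0}` (for `n ≥ 1`). -/
def kome (n : ℕ) : Pos := opts (LnList n ++ RnList n)

mutual
/-- `starAux n` represents `★(n+1)`: `★1 = {*L, *R}`, `★n = {★(n-1),...,★1,*L,*R}`. -/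
def starAux : ℕ → Pos
  | 0 => opts [termL, termR]
  | n + 1 => opts (starList (n + 1) ++ [termL, termR])
termination_by n => 2 * n + 1
/-- `starList n = [★n, ..., ★1]`. -/
def starList : ℕ → List Pos
  | 0 => []
  | n + 1 => starAux n :: starList n
termination_by n => 2 * n
end

/-- `bigstar n` is `★n` (meaningful for `n ≥ 1`). -/
def bigstar (n : ℕ) : Pos := starAux (n - 1)

/-- Sum of a list of positions (`*L` is the empty sum, and `G + *L = G`). -/
def sumList (l : List Pos) : Pos := l.foldr sum termL

/-- Nim-sum (XOR) of a list of naturals. -/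
def xorList (l : List ℕ) : ℕ := l.foldr (· ^^^ ·) 0

/-- Minimum excludant of a list of naturals. -/
noncomputable def mexList (l : List ℕ) : ℕ := sInf {n : ℕ | n ∉ l}

end Pos
namespace Pos

mutual
/-- A single non-initial pile of `n` tokens in Even Nim: an arbitrary positive
even number of tokens may be removed; a pile of 0 or 1 tokens is terminal,
won by Left (even remainder) resp. Right (odd remainder). -/
def npile : ℕ → Pos
  | 0 => termL
  | 1 => termR
  | n + 2 => opts (npileList (n + 2))
termination_by n => 2 * n + 1
/-- The options of a non-initial pile of `n` tokens: `[pile (n-2), pile (n-4), ...]`. -/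
def npileList : ℕ → List Pos
  | 0 => []
  | 1 => []
  | n + 2 => npile n :: npileList n
termination_by n => 2 * n
end

/-- A single initial pile of `a` tokens in Even Nim: any positive number of
tokens may be removed on the first move. -/
def ipile (a : ℕ) : Pos :=
  if a = 0 then termL else opts ((List.range a).reverse.map npile)

/-- A single pile of `n` tokens in the LR-ending partisan subtraction game with
subtraction set `S = {2, m}` (for `m ≥ 2`): a pile of 0 or 1 tokens is terminal,
won by Left resp. Right according to the parity of the remainder. -/
def subPile (m : ℕ) (n : ℕ) : Pos :=
  if n < 2 then (if n = 0 then termL else termR)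
  else opts (subPile m (n - 2) ::
    (if 2 ≤ m ∧ m ≤ n then [subPile m (n - m)] else []))
termination_by n
decreasing_by all_goals omega

end Pos

namespace Pos

/-- The period-7 table of values for the subtraction game with `S = {2, 5}`:
for `n ≡ 0,1,2,3,4,5,6 (mod 7)` the values are
`*L, *R, {*L}, {*R}, *L, {*L,{*R}}, {*L,*R}`. -/
def table25 (r : ℕ) : Pos :=
  if r = 0 then termL
  else if r = 1 then termR
  else if r = 2 then opts [termL]
  else if r = 3 then opts [termR]
  else if r = 4 then termL
  else if r = 5 then opts [termL, opts [termR]]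
  else opts [termL, termR]

end Pos

/-!
We compare positions by a stronger relation than `equiv`: `G` and `H` are related when, in every
context `X`, each player wins `G + X` exactly when they win `H + X`, whoever moves first. This
relation is a congruence for forming option sets and implies `equiv`. For `n ≥ 5` a pile of `n`
tokens is `{pile (n - 2), pile (n - 5)}`, so it suffices to check that the period-7 table satisfies
the same recurrence. Each of the seven instances is a reordering of options, a bypass to a terminal
(`{{*L, {*R}}, {*L}} ≡ *L`, say), or the removal of the reversible option `{*L, {*R}}` from
`{*R, {*L, {*R}}}`.
-/

namespace Pos

def options : Pos → List Pos
  | opts gs => gs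
  | _ => []

@[elab_as_elim]
theorem options_induction {P : Pos → Prop} (step : ∀ X, (∀ x ∈ X.options, P x) → P X) :
    ∀ X, P X
  | termL => step _ (by simp [options])
  | termR => step _ (by simp [options])
  | opts xs => step _ fun x (_ : x ∈ xs) => options_induction step x
decreasing_by have := List.sizeOf_lt_of_mem ‹x ∈ xs›; simp; omega

theorem wins_opts_true_iff {p : Player} {gs : List Pos} :
    Wins p true (opts gs) ↔ ∃ g ∈ gs, Wins p false g :=
  ⟨fun | .move _ _ g hg hw => ⟨g, hg, hw⟩, fun ⟨g, hg, hw⟩ => .move p gs g hg hw⟩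

theorem wins_opts_false_iff {p : Player} {gs : List Pos} :
    Wins p false (opts gs) ↔ ∀ g ∈ gs, Wins p true g :=
  ⟨fun | .wait _ _ hw => hw, .wait p gs⟩

theorem sum_opts (gs : List Pos) (X : Pos) :
    sum (opts gs) X = opts (gs.map (sum · X) ++ X.options.map (sum (opts gs))) := by
  cases X <;> simp [sum, options]

theorem sum_opts_of_options_eq_nil {T : Pos} (hT : T.options = []) (xs : List Pos) :
    sum T (opts xs) = opts (xs.map (sum T)) := by
  cases T <;> simp_all [sum, options]

theorem wins_sum_opts_true_iff {p : Player} {gs : List Pos} {X : Pos} :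
    Wins p true (sum (opts gs) X) ↔
      (∃ g ∈ gs, Wins p false (sum g X)) ∨
        ∃ x ∈ X.options, Wins p false (sum (opts gs) x) := by
  simp [sum_opts, wins_opts_true_iff, or_and_right, exists_or]

theorem wins_sum_opts_false_iff {p : Player} {gs : List Pos} {X : Pos} :
    Wins p false (sum (opts gs) X) ↔
      (∀ g ∈ gs, Wins p true (sum g X)) ∧
        ∀ x ∈ X.options, Wins p true (sum (opts gs) x) := by
  simp [sum_opts, wins_opts_false_iff, or_imp, forall_and]

theorem eq_opts_of_mem_options {G y : Pos} (hy : y ∈ G.options) : G = opts G.options := by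
  cases G <;> simp_all [options]

theorem Wins.sum_of_mem_options {p : Player} {G y X : Pos} (hy : y ∈ G.options)
    (h : Wins p false (sum y X)) : Wins p true (sum G X) := by
  rw [eq_opts_of_mem_options hy]
  exact wins_sum_opts_true_iff.mpr (.inl ⟨y, hy, h⟩)

theorem Wins.sum_mem_options {p : Player} {G y X : Pos} (h : Wins p false (sum G X))
    (hy : y ∈ G.options) : Wins p true (sum y X) := by
  rw [eq_opts_of_mem_options hy] at h
  exact (wins_sum_opts_false_iff.mp h).1 y hy

def WinsEquiv (G H : Pos) : Prop :=
  ∀ (X : Pos) (p : Player) (b : Bool), Wins p b (sum G X) ↔ Wins p b (sum H X)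

namespace WinsEquiv

@[simp]
theorem refl (G : Pos) : WinsEquiv G G := fun _ _ _ => Iff.rfl

theorem symm {G H : Pos} (h : WinsEquiv G H) : WinsEquiv H G := fun X p b => (h X p b).symm

theorem trans {G H K : Pos} (h₁ : WinsEquiv G H) (h₂ : WinsEquiv H K) : WinsEquiv G K :=
  fun X p b => (h₁ X p b).trans (h₂ X p b)

theorem equiv {G H : Pos} (h : WinsEquiv G H) : equiv G H := by
  intro X _
  have hl := h X Player.left true
  have hr := h X Player.left false
  unfold outcome
  split_ifs <;> tauto

theorem opts_congr_imp {gs hs : List Pos} (h : ∀ g ∈ gs, ∃ h ∈ hs, WinsEquiv g h)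
    (h' : ∀ h ∈ hs, ∃ g ∈ gs, WinsEquiv g h) (X : Pos) (p : Player) (b : Bool) :
    Wins p b (sum (opts gs) X) → Wins p b (sum (opts hs) X) := by
  induction X using options_induction generalizing p b with
  | step X ih =>
  cases b
  · rw [wins_sum_opts_false_iff, wins_sum_opts_false_iff]
    refine fun ⟨hg, hx⟩ => ⟨fun k hk => ?_, fun x hx' => ih x hx' p true (hx x hx')⟩
    obtain ⟨g, hg', hgk⟩ := h' k hk
    exact (hgk X p true).mp (hg g hg')
  · rw [wins_sum_opts_true_iff, wins_sum_opts_true_iff]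
    rintro (⟨g, hg, hw⟩ | ⟨x, hx, hw⟩)
    · obtain ⟨k, hk, hgk⟩ := h g hg
      exact .inl ⟨k, hk, (hgk X p false).mp hw⟩
    · exact .inr ⟨x, hx, ih x hx p false hw⟩

theorem opts_congr {gs hs : List Pos} (h : ∀ g ∈ gs, ∃ h ∈ hs, WinsEquiv g h)
    (h' : ∀ h ∈ hs, ∃ g ∈ gs, WinsEquiv g h) : WinsEquiv (opts gs) (opts hs) := by
  have h_symm : ∀ g ∈ gs, ∃ h ∈ hs, WinsEquiv h g :=
    fun g hg => (h g hg).imp fun _ ⟨hk, e⟩ => ⟨hk, e.symm⟩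
  have h'_symm : ∀ h ∈ hs, ∃ g ∈ gs, WinsEquiv h g :=
    fun k hk => (h' k hk).imp fun _ ⟨hg, e⟩ => ⟨hg, e.symm⟩
  exact fun X p b => ⟨opts_congr_imp h h' X p b, opts_congr_imp h'_symm h_symm X p b⟩

theorem opts_cons_reversible {ds rest : List Pos} (hds : opts rest ∈ ds) :
    WinsEquiv (opts (opts ds :: rest)) (opts rest) := by
  intro X
  induction X using options_induction with
  | step X ih =>
  intro p b
  cases b
  · rw [wins_sum_opts_false_iff, wins_sum_opts_false_iff, List.forall_mem_cons]
    constructor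
    · exact fun ⟨⟨_, hg⟩, hx⟩ => ⟨hg, fun x hx' => (ih x hx' p true).mp (hx x hx')⟩
    · refine fun hw => ⟨⟨?_, hw.1⟩, fun x hx => (ih x hx p true).mpr (hw.2 x hx)⟩
      exact Wins.sum_of_mem_options hds (wins_sum_opts_false_iff.mpr hw)
  · rw [wins_sum_opts_true_iff, wins_sum_opts_true_iff, List.exists_mem_cons_iff]
    constructor
    · rintro ((hw | hg) | ⟨x, hx, hw⟩)
      · exact wins_sum_opts_true_iff.mp (hw.sum_mem_options hds)
      · exact .inl hg
      · exact .inr ⟨x, hx, (ih x hx p false).mp hw⟩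
    · rintro (hg | ⟨x, hx, hw⟩)
      · exact .inl (.inr hg)
      · exact .inr ⟨x, hx, (ih x hx p false).mpr hw⟩

/-- Any move to `g + X` is answered by `T + X`. When `X` has no options either, moving to
`{T} + X` is how a player hands the turn over. -/
theorem opts_bypass {T : Pos} (hT : T.options = []) {gs : List Pos} (hmem : opts [T] ∈ gs)
    (hall : ∀ g ∈ gs, T ∈ g.options) : WinsEquiv (opts gs) T := by
  intro X
  induction X using options_induction with
  | step X ih =>
  intro p
  have answer : ∀ g ∈ gs, Wins p false (sum g X) → Wins p true (sum T X) :=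
    fun g hg hw => hw.sum_mem_options (hall g hg)
  have threat : Wins p false (sum T X) → ∀ g ∈ gs, Wins p true (sum g X) :=
    fun hw g hg => Wins.sum_of_mem_options (hall g hg) hw
  obtain ⟨xs, rfl⟩ | hX : (∃ xs, X = opts xs) ∨ X.options = [] := by
    cases X <;> simp [options]
  · rw [sum_opts_of_options_eq_nil hT] at answer threat ⊢
    simp only [options] at ih
    rintro (_ | _)
    · simp only [wins_sum_opts_false_iff, wins_opts_false_iff, List.forall_mem_map, options]
      refine ⟨fun ⟨_, hx⟩ x hx' => (ih x hx' p true).mp (hx x hx'),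
        fun hw => ⟨threat ?_, ?_⟩⟩
      · exact wins_opts_false_iff.mpr (List.forall_mem_map.mpr hw)
      · exact fun x hx => (ih x hx p true).mpr (hw x hx)
    · rw [wins_sum_opts_true_iff]
      constructor
      · rintro (⟨g, hg, hw⟩ | ⟨x, hx, hw⟩)
        · exact answer g hg hw
        · exact wins_opts_true_iff.mpr ⟨_, List.mem_map_of_mem hx, (ih x hx p false).mp hw⟩
      · intro hw
        obtain ⟨_, hy, hw⟩ := wins_opts_true_iff.mp hw
        obtain ⟨x, hx, rfl⟩ := List.mem_map.mp hy
        exact .inr ⟨x, hx, (ih x hx p false).mpr hw⟩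
  · rintro (_ | _)
    · rw [wins_sum_opts_false_iff]
      simp only [hX, List.not_mem_nil, false_imp_iff, implies_true, and_true]
      refine ⟨fun hw => ?_, threat⟩
      simpa [hX] using wins_sum_opts_true_iff.mp (hw _ hmem)
    · rw [wins_sum_opts_true_iff]
      simp only [hX, List.not_mem_nil, false_and, exists_false, or_false]
      refine ⟨fun ⟨g, hg, hw⟩ => answer g hg hw, fun hw => ⟨_, hmem, ?_⟩⟩
      simpa [hX, wins_sum_opts_false_iff] using hw

end WinsEquiv

open WinsEquiv

theorem subPile_five_of_five_le {n : ℕ} (hn : 5 ≤ n) :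
    subPile 5 n = opts [subPile 5 (n - 2), subPile 5 (n - 5)] := by
  rw [subPile]
  simp [show ¬n < 2 by omega, hn]

theorem table25_recurrence {n : ℕ} (hn : 5 ≤ n) :
    WinsEquiv (opts [table25 ((n - 2) % 7), table25 ((n - 5) % 7)]) (table25 (n % 7)) := by
  rw [show (n - 2) % 7 = (n % 7 + 5) % 7 by omega, show (n - 5) % 7 = (n % 7 + 2) % 7 by omega]
  generalize hr : n % 7 = r
  have : r < 7 := hr ▸ Nat.mod_lt n (by norm_num)
  interval_cases r <;> simp only [table25] <;> norm_num
  · exact opts_bypass rfl (by simp) (by simp [options])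
  · exact opts_bypass rfl (by simp) (by simp [options])
  · exact opts_congr (by simp) (by simp)
  · exact (opts_congr (hs := [opts [termL, opts [termR]], termR]) (by simp) (by simp)).trans
      (opts_cons_reversible (by simp))
  · exact opts_bypass rfl (by simp) (by simp [options])
  · exact opts_congr (by simp) (by simp)

theorem subPile_five_winsEquiv_table25 (n : ℕ) :
    WinsEquiv (subPile 5 n) (table25 (n % 7)) := by
  induction n using Nat.strong_induction_on with
  | _ n ih =>
  rcases lt_or_ge n 5 with hn | hn
  · interval_cases n <;> simp [subPile, table25]
    exact opts_bypass rfl (by simp) (by simp [options])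
  · have ih₂ := ih (n - 2) (by omega)
    have ih₅ := ih (n - 5) (by omega)
    rw [subPile_five_of_five_le hn]
    exact (opts_congr (by simp [ih₂, ih₅]) (by simp [ih₂, ih₅])).trans
      (table25_recurrence hn)

end Pos

/-- in the LR-ending partisan subtraction game with `S = {2, 5}`,
the value of a pile of `n` tokens is periodic in `n` with period 7, given by the
table `*L, *R, {*L}, {*R}, *L, {*L,{*R}}, {*L,*R}` (up to equivalence). -/
theorem subtraction_2_5 (n : ℕ) :
    Pos.equiv (Pos.subPile 5 n) (Pos.table25 (n % 7)) :=
  (Pos.subPile_five_winsEquiv_table25 n).equiv
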